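/- If G is a connected simple graph whose peripheral subgraph (the subgraph induced by the periphery) is connected and whose annular subgraph (the subgraph induced by the annulus) is nonempty and connected, then G has at least 13 vertices. -/

import Mathlib

/-- Eccentricity of a vertex in a (finite connected) simple graph:
the maximum distance from `v` to any vertex. -/
noncomputable def SimpleGraph.mecc {V : Type*} (G : SimpleGraph V) (v : V) : ℕ :=
  sSup (Set.range (G.dist v))

/-- Radius: the minimum eccentricity. -/
noncomputable def SimpleGraph.mrad {V : Type*} (G : SimpleGraph V) : ℕ :=
  sInf (Set.range G.mecc)

/-- Diameter: the maximum eccentricity. -/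
noncomputable def SimpleGraph.mdiam {V : Type*} (G : SimpleGraph V) : ℕ :=
  sSup (Set.range G.mecc)

/-- The center: the set of vertices of minimum eccentricity. -/
noncomputable def SimpleGraph.mcenter {V : Type*} (G : SimpleGraph V) : Set V :=
  {v | G.mecc v = G.mrad}

/-- The annulus: the set of vertices of intermediate eccentricity. -/
noncomputable def SimpleGraph.mannulus {V : Type*} (G : SimpleGraph V) : Set V :=
  {v | G.mrad < G.mecc v ∧ G.mecc v < G.mdiam}

/-- The periphery: the set of vertices of maximum eccentricity. -/
noncomputable def SimpleGraph.mperiphery {V : Type*} (G : SimpleGraph V) : Set V :=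
  {v | G.mecc v = G.mdiam}

/-!
A finite connected graph on `n` vertices has a vertex within distance `n / 2` of every vertex.
In the connected peripheral subgraph every vertex has a peripheral vertex at distance `diam`, so
`|P| ≥ 2 diam`. A nonempty annulus forces `rad + 2 ≤ diam ≤ 2 rad`, and a central vertex is
counted besides `P` and `A`. If `diam ≤ 2 rad - 2`, then `diam ≥ 6` and `|P| ≥ 12`. If
`diam = 2 rad - 1`, then `diam ≥ 5` and the annulus holds two distinct vertices close to the two
ends of a diametral pair. If `diam = 2 rad`, every peripheral vertex is adjacent to the annulus,
so an annular vertex within distance one of the whole annulus would be central; a connected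
annulus on at most three vertices has such a vertex, hence `|A| ≥ 4`.
-/

namespace SimpleGraph

section Walks

variable {W W' : Type*} {H : SimpleGraph W} {u v w z : W}

lemma Reachable.dist_map_le {H' : SimpleGraph W'} (f : H →g H') (h : H.Reachable u v) :
    H'.dist (f u) (f v) ≤ H.dist u v := by
  obtain ⟨p, hp⟩ := h.exists_walk_length_eq_dist
  simpa [hp] using H'.dist_le (p.map f)

lemma dist_le_dist_induce {s : Set W} {x y : s} (h : (H.induce s).Reachable x y) :
    H.dist x y ≤ (H.induce s).dist x y :=
  h.dist_map_le (Embedding.induce s).toHom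

lemma Walk.exists_mem_support_eq_of_le_add_one (f : W → ℕ)
    (hf : ∀ a b, H.Adj a b → f b ≤ f a + 1) (p : H.Walk u v) {m : ℕ}
    (hu : f u ≤ m) (hv : m ≤ f v) : ∃ x ∈ p.support, f x = m := by
  induction p with
  | nil => exact ⟨_, by simp, le_antisymm hu hv⟩
  | @cons a b c hab q ih =>
    rcases hu.eq_or_lt with hu | hu
    · exact ⟨a, by simp, hu⟩
    · obtain ⟨x, hx, hfx⟩ := ih ((hf a b hab).trans hu) hv
      exact ⟨x, by simp [hx], hfx⟩

lemma Walk.IsPath.append {p : H.Walk u v} {q : H.Walk v w} (hp : p.IsPath) (hq : q.IsPath)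
    (h : ∀ x ∈ p.support, x ∈ q.support → x = v) : (p.append q).IsPath := by
  have hq' := hq.support_nodup
  rw [← q.cons_tail_support, List.nodup_cons] at hq'
  rw [Walk.isPath_def, Walk.support_append, List.nodup_append]
  refine ⟨hp.support_nodup, hq'.2, fun x hxp y hyq hxy => ?_⟩
  subst hxy
  obtain rfl := h x hxp (List.mem_of_mem_tail hyq)
  exact hq'.1 hyq

lemma Walk.dist_add_dist_of_length_eq_dist [DecidableEq W] (p : H.Walk u v)
    (hp : p.length = H.dist u v) (hz : z ∈ p.support) :
    H.dist u z + H.dist z v = H.dist u v := by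
  have htake := H.dist_le (p.takeUntil z hz)
  have hdrop := H.dist_le (p.dropUntil z hz)
  have hlen := congrArg Walk.length (p.take_spec hz)
  have htri := (p.takeUntil z hz).reachable.dist_triangle_left v
  rw [Walk.length_append] at hlen
  omega

lemma Walk.dist_getVert_le (p : H.Walk u v) {i j : ℕ} (hij : i ≤ j) :
    H.dist (p.getVert i) (p.getVert j) ≤ j - i := by
  have h := H.dist_le ((p.drop i).take (j - i))
  rw [Walk.take_length, Walk.drop_getVert, Nat.add_sub_cancel' hij] at h
  omega

lemma Reachable.exists_isPath_append_of_forall_dist_le {p : H.Walk u v} (hp : p.IsPath)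
    (hr : H.Reachable v z) (hmin : ∀ x ∈ p.support, H.dist v z ≤ H.dist x z) :
    ∃ r : H.Walk u z, r.IsPath ∧ r.length = p.length + H.dist v z := by
  classical
  obtain ⟨q, hq, hql⟩ := hr.exists_path_of_dist
  refine ⟨p.append q, hp.append hq fun x hxp hxq => ?_, by rw [Walk.length_append, hql]⟩
  have hsplit := q.dist_add_dist_of_length_eq_dist hql hxq
  have hx := hmin x hxp
  exact (((q.takeUntil x hxq).reachable.dist_eq_zero_iff).1 (by omega)).symm

lemma exists_isPath_forall_isPath_length_le [Finite W] [Nonempty W] (H : SimpleGraph W) :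
    ∃ (x y : W) (p : H.Walk x y), p.IsPath ∧
      ∀ (a b : W) (q : H.Walk a b), q.IsPath → q.length ≤ p.length := by
  have := Fintype.ofFinite W
  let lengths : Set ℕ := {n | ∃ (a b : W) (q : H.Walk a b), q.IsPath ∧ q.length = n}
  have hbdd : BddAbove lengths :=
    ⟨Fintype.card W, by rintro _ ⟨a, b, q, hq, rfl⟩; exact hq.length_lt.le⟩
  obtain ⟨x, y, p, hp, hpl⟩ :=
    Nat.sSup_mem (s := lengths) ⟨0, Classical.arbitrary W, _, .nil, .nil, rfl⟩ hbdd
  exact ⟨x, y, p, hp, fun a b q hq => hpl ▸ le_csSup hbdd ⟨a, b, q, hq, rfl⟩⟩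

/-- Take `m` the midpoint of a longest path: a geodesic to `z` from the point of the path closest
to `z` extends either half of the path to a path, so it is no longer than the shorter half. -/
theorem Connected.exists_forall_two_mul_dist_le_card [Finite W] (hH : H.Connected) :
    ∃ m, ∀ z, 2 * H.dist m z ≤ Nat.card W := by
  classical
  have := Fintype.ofFinite W
  have := hH.nonempty
  obtain ⟨x, y, p, hp, hmax⟩ := exists_isPath_forall_isPath_length_le H
  set h := (p.length + 1) / 2
  refine ⟨p.getVert h, fun z => ?_⟩
  obtain ⟨a, ha, hmin⟩ := p.support.toFinset.exists_min_image (H.dist · z) ⟨x, by simp⟩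
  simp only [List.mem_toFinset] at ha hmin
  set t := (p.takeUntil a ha).length
  obtain ⟨r₁, hr₁, hr₁l⟩ := (hH a z).exists_isPath_append_of_forall_dist_le (hp.takeUntil ha)
    fun w hw => hmin w (p.support_takeUntil_subset_support ha hw)
  obtain ⟨r₂, hr₂, hr₂l⟩ := (hH a z).exists_isPath_append_of_forall_dist_le
    (hp.dropUntil ha).reverse fun w hw => hmin w <| p.support_dropUntil_subset_support ha <| by
      rwa [Walk.support_reverse, List.mem_reverse] at hw
  have hlen := congrArg Walk.length (p.take_spec ha)
  rw [Walk.length_append] at hlen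
  rw [Walk.length_reverse] at hr₂l
  have h₁ := hmax _ _ r₁ hr₁
  have h₂ := hmax _ _ r₂ hr₂
  have hma : H.dist (p.getVert h) a ≤ max (h - t) (t - h) := by
    rw [← p.getVert_length_takeUntil ha]
    rcases le_total t h with hth | hht
    · rw [dist_comm]; exact (p.dist_getVert_le hth).trans (le_max_left _ _)
    · exact (p.dist_getVert_le hht).trans (le_max_right _ _)
  have htri : H.dist (p.getVert h) z ≤ H.dist (p.getVert h) a + H.dist a z := hH.dist_triangle
  have hcard : p.length < Fintype.card W := hp.length_lt
  rw [Nat.card_eq_fintype_card]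
  omega

end Walks

section Eccentricity

variable {V : Type*} {G : SimpleGraph V}

lemma dist_le_mecc [Finite V] (v w : V) : G.dist v w ≤ G.mecc v :=
  le_csSup (Set.finite_range _).bddAbove (Set.mem_range_self w)

lemma exists_dist_eq_mecc [Finite V] (v : V) : ∃ w, G.dist v w = G.mecc v :=
  Nat.sSup_mem ⟨_, Set.mem_range_self v⟩ (Set.finite_range _).bddAbove

lemma mecc_le_of_forall_dist_le {v : V} {n : ℕ} (h : ∀ w, G.dist v w ≤ n) : G.mecc v ≤ n :=
  csSup_le ⟨_, Set.mem_range_self v⟩ (Set.forall_mem_range.2 h)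

lemma mecc_le_mdiam [Finite V] (v : V) : G.mecc v ≤ G.mdiam :=
  le_csSup (Set.finite_range _).bddAbove (Set.mem_range_self v)

lemma mrad_le_mecc (v : V) : G.mrad ≤ G.mecc v :=
  Nat.sInf_le (Set.mem_range_self v)

lemma exists_mecc_eq_mrad [Nonempty V] (G : SimpleGraph V) : ∃ c, G.mecc c = G.mrad :=
  Nat.sInf_mem (Set.range_nonempty _)

lemma exists_mecc_eq_mdiam [Finite V] [Nonempty V] (G : SimpleGraph V) :
    ∃ u, G.mecc u = G.mdiam :=
  Nat.sSup_mem (Set.range_nonempty _) (Set.finite_range _).bddAbove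

lemma mecc_eq_mdiam_of_dist_eq_mdiam [Finite V] {v w : V} (h : G.dist v w = G.mdiam) :
    G.mecc w = G.mdiam :=
  (mecc_le_mdiam w).antisymm (h ▸ dist_comm (G := G) ▸ dist_le_mecc w v)

variable [Finite V]

lemma mecc_le_dist_add_mecc (hG : G.Connected) (v w : V) :
    G.mecc v ≤ G.dist v w + G.mecc w :=
  mecc_le_of_forall_dist_le fun x => hG.dist_triangle.trans (by gcongr; exact dist_le_mecc w x)

lemma Adj.mecc_le_mecc_add_one (hG : G.Connected) {a b : V} (hab : G.Adj a b) :
    G.mecc b ≤ G.mecc a + 1 := by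
  simpa [dist_comm, dist_eq_one_iff_adj.2 hab, add_comm] using mecc_le_dist_add_mecc hG b a

lemma mdiam_le_two_mul_mrad (hG : G.Connected) : G.mdiam ≤ 2 * G.mrad := by
  have := hG.nonempty
  obtain ⟨c, hc⟩ := G.exists_mecc_eq_mrad
  obtain ⟨u, hu⟩ := G.exists_mecc_eq_mdiam
  calc G.mdiam = G.mecc u := hu.symm
    _ ≤ G.dist c u + G.mecc c := dist_comm (G := G) ▸ mecc_le_dist_add_mecc hG u c
    _ ≤ G.mecc c + G.mecc c := by gcongr; exact dist_le_mecc c u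
    _ = 2 * G.mrad := by rw [hc, two_mul]

end Eccentricity

section Annulus

variable {V : Type*} [Finite V] {G : SimpleGraph V}

/-- Eccentricity changes by at most one along an edge, so it takes the value `mdiam - 1` on a
geodesic from a central vertex to `p`. -/
lemma exists_mecc_add_one_eq_mdiam_dist_le (hG : G.Connected) (h : G.mrad < G.mdiam) {p : V}
    (hp : G.mecc p = G.mdiam) :
    ∃ a, G.mecc a + 1 = G.mdiam ∧ G.dist a p + G.mdiam ≤ 2 * G.mrad + 1 := by
  classical
  have := hG.nonempty
  obtain ⟨c, hc⟩ := G.exists_mecc_eq_mrad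
  obtain ⟨q, -, hql⟩ := hG.exists_path_of_dist c p
  obtain ⟨a, ha, hae⟩ := q.exists_mem_support_eq_of_le_add_one G.mecc
    (fun _ _ hab => hab.mecc_le_mecc_add_one hG) (m := G.mdiam - 1) (by omega) (by omega)
  have hsplit := q.dist_add_dist_of_length_eq_dist hql ha
  have hcp := dist_le_mecc (G := G) c p
  have hac := mecc_le_dist_add_mecc hG a c
  rw [dist_comm] at hac
  exact ⟨a, by omega, by omega⟩

lemma exists_mem_mannulus_adj (hG : G.Connected) (hd : G.mdiam = 2 * G.mrad) (hr : 2 ≤ G.mrad)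
    {p : V} (hp : G.mecc p = G.mdiam) : ∃ a ∈ G.mannulus, G.Adj a p := by
  obtain ⟨a, hae, hap⟩ := exists_mecc_add_one_eq_mdiam_dist_le hG (by omega) hp
  have hne : a ≠ p := by rintro rfl; omega
  have hdist := hG.pos_dist_of_ne hne
  exact ⟨a, ⟨by omega, by omega⟩, dist_eq_one_iff_adj.1 (by omega)⟩

/-- Every vertex is central, annular or peripheral; the peripheral ones are adjacent to the
annulus, so they lie within distance two of `a`. -/
lemma mecc_le_mrad_of_forall_mem_mannulus_dist_le_one (hG : G.Connected)
    (hd : G.mdiam = 2 * G.mrad) (hr : 2 ≤ G.mrad) {a : V}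
    (ha : ∀ x ∈ G.mannulus, G.dist a x ≤ 1) : G.mecc a ≤ G.mrad := by
  refine mecc_le_of_forall_dist_le fun w => ?_
  have hrw := mrad_le_mecc (G := G) w
  have hwd := mecc_le_mdiam (G := G) w
  rcases hrw.eq_or_lt with hw | hw
  · rw [dist_comm, hw]
    exact dist_le_mecc w a
  rcases hwd.lt_or_eq with hw' | hw'
  · exact (ha w ⟨hw, hw'⟩).trans (by omega)
  obtain ⟨x, hx, hxw⟩ := exists_mem_mannulus_adj hG hd hr hw'
  have htri : G.dist a w ≤ G.dist a x + G.dist x w := hG.dist_triangle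
  rw [dist_eq_one_iff_adj.2 hxw] at htri
  have := ha x hx
  omega

/-- A connected annulus of at most three vertices would contain a vertex within distance one of
all of it. -/
theorem four_le_ncard_mannulus (hG : G.Connected) (hAc : (G.induce G.mannulus).Connected)
    (hd : G.mdiam = 2 * G.mrad) : 4 ≤ G.mannulus.ncard := by
  obtain ⟨⟨a₀, ha₀⟩⟩ := hAc.nonempty
  have hr : 2 ≤ G.mrad := by have := ha₀.1; have := ha₀.2; omega
  by_contra! hlt
  obtain ⟨⟨a, ha⟩, hm⟩ := hAc.exists_forall_two_mul_dist_le_card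
  rw [Nat.card_coe_set_eq] at hm
  have := mecc_le_mrad_of_forall_mem_mannulus_dist_le_one hG hd hr (a := a) fun x hx => by
    have : G.dist a x ≤ _ := dist_le_dist_induce (hAc ⟨a, ha⟩ ⟨x, hx⟩)
    have := hm ⟨x, hx⟩
    omega
  exact absurd ha.1 (by omega)

/-- Annular vertices near the two ends of a diametral pair are distinct. -/
theorem two_le_ncard_mannulus (hG : G.Connected) (hrd : G.mrad + 2 ≤ G.mdiam)
    (h : 4 * G.mrad + 2 < 3 * G.mdiam) : 2 ≤ G.mannulus.ncard := by
  have := hG.nonempty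
  obtain ⟨u, hu⟩ := G.exists_mecc_eq_mdiam
  obtain ⟨v, huv⟩ := exists_dist_eq_mecc (G := G) u
  rw [hu] at huv
  obtain ⟨a, hae, hau⟩ := exists_mecc_add_one_eq_mdiam_dist_le hG (by omega) hu
  obtain ⟨b, hbe, hbv⟩ :=
    exists_mecc_add_one_eq_mdiam_dist_le hG (by omega) (mecc_eq_mdiam_of_dist_eq_mdiam huv)
  refine (Set.one_lt_ncard).2 ⟨a, ⟨by omega, by omega⟩, b, ⟨by omega, by omega⟩, ?_⟩
  rintro rfl
  have htri : G.dist u v ≤ G.dist u a + G.dist a v := hG.dist_triangle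
  have := dist_comm (G := G) (u := u) (v := a)
  omega

theorem two_mul_mdiam_le_ncard_mperiphery (hP : (G.induce G.mperiphery).Connected) :
    2 * G.mdiam ≤ G.mperiphery.ncard := by
  obtain ⟨⟨m, hm⟩, hcenter⟩ := hP.exists_forall_two_mul_dist_le_card
  obtain ⟨w, hw⟩ := exists_dist_eq_mecc (G := G) m
  have hwP : w ∈ G.mperiphery := mecc_eq_mdiam_of_dist_eq_mdiam (hw.trans hm)
  have hind : G.dist m w ≤ _ := dist_le_dist_induce (hP ⟨m, hm⟩ ⟨w, hwP⟩)
  have := hcenter ⟨w, hwP⟩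
  rw [Nat.card_coe_set_eq] at this
  have hm' : G.mecc m = G.mdiam := hm
  omega

theorem ncard_mperiphery_add_ncard_mannulus_lt [Nonempty V] (h : G.mrad < G.mdiam) :
    G.mperiphery.ncard + G.mannulus.ncard < Nat.card V := by
  obtain ⟨c, hc⟩ := G.exists_mecc_eq_mrad
  have hdisj : Disjoint G.mperiphery G.mannulus :=
    Set.disjoint_left.2 fun x (hxP : _ = _) hxA => by have := hxA.2; omega
  rw [← Set.ncard_union_eq hdisj]
  refine Set.ncard_lt_card fun huniv => ?_
  rcases huniv.symm ▸ Set.mem_univ c with (hcP : _ = _) | hcA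
  · omega
  · have := hcA.1; omega

end Annulus

end SimpleGraph

open SimpleGraph

theorem connected_peripheral_and_annular_subgraphs_order_ge_13
    {V : Type*} [Fintype V] (G : SimpleGraph V) (hG : G.Connected)
    (hP : (G.induce G.mperiphery).Connected)
    (hA : G.mannulus.Nonempty) (hAc : (G.induce G.mannulus).Connected) :
    13 ≤ Fintype.card V := by
  have := hG.nonempty
  obtain ⟨a, ha⟩ := hA
  have hrd : G.mrad + 2 ≤ G.mdiam := by have := ha.1; have := ha.2; omega
  have hdr := mdiam_le_two_mul_mrad hG
  have hPcard := two_mul_mdiam_le_ncard_mperiphery hP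
  have hcard := ncard_mperiphery_add_ncard_mannulus_lt (G := G) (by omega)
  rw [Nat.card_eq_fintype_card] at hcard
  rcases (show G.mdiam = 2 * G.mrad ∨ G.mdiam + 1 = 2 * G.mrad ∨ G.mdiam + 2 ≤ 2 * G.mrad by
    omega) with hd | hd | hd
  · have := four_le_ncard_mannulus hG hAc hd
    omega
  · have := two_le_ncard_mannulus hG hrd (by omega)
    omega
  · have := (Set.ncard_pos).2 ⟨a, ha⟩
    omega
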